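/- Let S and A be nonempty finite sets and let 𝒫 ⊆ Δ(S)^{S×A} be a compact (not necessarily convex) uncertainty set. The following three statements are equivalent: (1) 𝒫 is weakly sa-tractable; (2) for every stationary policy π ∈ Δ(A)^S, every next-state-independent r ∈ ℝ^{S×A×S} and every γ ∈ [0,1), there exists P̂ ∈ 𝒫 such that û^π = v^{π,P̂}; (3) 𝒫 satisfies the weak sa-SSP. -/

import Mathlib

/-!
For next-state-independent rewards `T̂^π` minimizes every `(s, a)`-row separately, and
`T^π_P u - T̂^π u = γ ∑ₐ π_{sa} (P_{sa}·u - min_Q Q_{sa}·u)`. So a kernel minimizing all rows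
`P_{sa}·û^π` at once has value function `û^π`, which is (3) ⇒ (2); when every `π_{sa} > 0` the
converse holds too, and for (2) ⇒ (3) a given `V` is made into `û^π` by the uniform policy,
`γ = 1/2` and the rewards `V_s - γ min_Q Q_{sa}·V`.

Since `T̂^π ≤ T^π_P` and `T^π_P` is a monotone contraction, `û^π ≤ v^{π,P}` for every `P`, which
gives (2) ⇒ (1). Conversely `v^{π,P} ≥ T^π_P û^π`, so `μ·v^{π,P} - μ·û^π` dominates the continuous
nonnegative gap `μ·(T^π_P û^π - û^π)`; under (1) with uniform `μ` this gap vanishes at a minimizer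
on the compact `𝒫`, and that kernel has value `û^π`.
-/

open scoped BigOperators

namespace RMDP

variable {S A : Type*} [Fintype S] [Fintype A]

def IsKernel (P : S → A → S → ℝ) : Prop := ∀ s a, P s a ∈ stdSimplex ℝ S

def IsPolicy (π : S → A → ℝ) : Prop := ∀ s, π s ∈ stdSimplex ℝ A

def NextStateIndep (r : S → A → S → ℝ) : Prop :=
  ∀ (s : S) (a : A) (s' s'' : S), r s a s' = r s a s''

noncomputable def minOver {K : Type*} (K0 : Set K) (f : K → ℝ) : ℝ := sInf (f '' K0)

noncomputable def maxOver {K : Type*} (K0 : Set K) (f : K → ℝ) : ℝ := sSup (f '' K0)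

noncomputable def TpiP (π : S → A → ℝ) (r : S → A → S → ℝ) (γ : ℝ)
    (P : S → A → S → ℝ) (v : S → ℝ) : S → ℝ :=
  fun s => ∑ a, π s a * ∑ s', P s a s' * (r s a s' + γ * v s')

noncomputable def Tpi (US : Set (S → A → S → ℝ)) (π : S → A → ℝ)
    (r : S → A → S → ℝ) (γ : ℝ) (v : S → ℝ) : S → ℝ :=
  fun s => minOver US (fun P => ∑ a, π s a * ∑ s', P s a s' * (r s a s' + γ * v s'))

noncomputable def TpiHat (US : Set (S → A → S → ℝ)) (π : S → A → ℝ)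
    (r : S → A → S → ℝ) (γ : ℝ) (v : S → ℝ) : S → ℝ :=
  fun s => ∑ a, π s a * minOver US (fun P => ∑ s', P s a s' * (r s a s' + γ * v s'))

noncomputable def Topt (US : Set (S → A → S → ℝ)) (r : S → A → S → ℝ) (γ : ℝ)
    (v : S → ℝ) : S → ℝ :=
  fun s => maxOver (stdSimplex ℝ A)
    (fun p => minOver US (fun P => ∑ a, p a * ∑ s', P s a s' * (r s a s' + γ * v s')))

def IsHPolicy (π : List (S × A) → S → A → ℝ) : Prop := ∀ h s, π h s ∈ stdSimplex ℝ A

noncomputable def expRHH (π : List (S × A) → S → A → ℝ)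
    (Q : List (S × A) → S → A → S → ℝ) (r : S → A → S → ℝ) :
    ℕ → List (S × A) → S → ℝ
  | 0, h, s => ∑ a, π h s a * ∑ s', Q (h ++ [(s, a)]) s a s' * r s a s'
  | (t + 1), h, s =>
      ∑ a, π h s a * ∑ s', Q (h ++ [(s, a)]) s a s' * expRHH π Q r t (h ++ [(s, a)]) s'

noncomputable def vHH (π : List (S × A) → S → A → ℝ)
    (Q : List (S × A) → S → A → S → ℝ) (r : S → A → S → ℝ) (γ : ℝ) (s : S) : ℝ :=
  ∑' t : ℕ, γ ^ t * expRHH π Q r t [] s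

def STractable (US : Set (S → A → S → ℝ)) : Prop :=
  ∀ π : S → A → ℝ, IsPolicy π →
    ∀ (r : S → A → S → ℝ) (γ : ℝ), 0 ≤ γ → γ < 1 →
      ∀ v : (S → A → S → ℝ) → S → ℝ, (∀ P ∈ US, TpiP π r γ P (v P) = v P) →
        ∀ u : S → ℝ, Tpi US π r γ u = u →
          ∀ μ ∈ stdSimplex ℝ S,
            minOver US (fun P => ∑ s, μ s * v P s) = ∑ s, μ s * u s

def SATractable (US : Set (S → A → S → ℝ)) : Prop :=
  ∀ π : S → A → ℝ, IsPolicy π →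
    ∀ (r : S → A → S → ℝ) (γ : ℝ), 0 ≤ γ → γ < 1 →
      ∀ v : (S → A → S → ℝ) → S → ℝ, (∀ P ∈ US, TpiP π r γ P (v P) = v P) →
        ∀ uhat : S → ℝ, TpiHat US π r γ uhat = uhat →
          ∀ μ ∈ stdSimplex ℝ S,
            minOver US (fun P => ∑ s, μ s * v P s) = ∑ s, μ s * uhat s

def WeakSTractable (US : Set (S → A → S → ℝ)) : Prop :=
  ∀ π : S → A → ℝ, IsPolicy π →
    ∀ (r : S → A → S → ℝ), NextStateIndep r → ∀ γ : ℝ, 0 ≤ γ → γ < 1 →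
      ∀ v : (S → A → S → ℝ) → S → ℝ, (∀ P ∈ US, TpiP π r γ P (v P) = v P) →
        ∀ u : S → ℝ, Tpi US π r γ u = u →
          ∀ μ ∈ stdSimplex ℝ S,
            minOver US (fun P => ∑ s, μ s * v P s) = ∑ s, μ s * u s

def WeakSATractable (US : Set (S → A → S → ℝ)) : Prop :=
  ∀ π : S → A → ℝ, IsPolicy π →
    ∀ (r : S → A → S → ℝ), NextStateIndep r → ∀ γ : ℝ, 0 ≤ γ → γ < 1 →
      ∀ v : (S → A → S → ℝ) → S → ℝ, (∀ P ∈ US, TpiP π r γ P (v P) = v P) →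
        ∀ uhat : S → ℝ, TpiHat US π r γ uhat = uhat →
          ∀ μ ∈ stdSimplex ℝ S,
            minOver US (fun P => ∑ s, μ s * v P s) = ∑ s, μ s * uhat s

def SSPs (US : Set (S → A → S → ℝ)) : Prop :=
  ∀ V : S → A → S → ℝ, ∃ Pstar ∈ US, ∀ s : S, ∀ P ∈ US,
    (∑ a, ∑ s', Pstar s a s' * V s a s') ≤ ∑ a, ∑ s', P s a s' * V s a s'

def SSPsa (US : Set (S → A → S → ℝ)) : Prop :=
  ∀ V : S → A → S → ℝ, ∃ Pstar ∈ US, ∀ (s : S) (a : A), ∀ P ∈ US,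
    (∑ s', Pstar s a s' * V s a s') ≤ ∑ s', P s a s' * V s a s'

def WeakSSPs (US : Set (S → A → S → ℝ)) : Prop :=
  ∀ π : S → A → ℝ, IsPolicy π → ∀ V : S → ℝ, ∃ Pstar ∈ US, ∀ s : S, ∀ P ∈ US,
    (∑ a, π s a * ∑ s', Pstar s a s' * V s') ≤ ∑ a, π s a * ∑ s', P s a s' * V s'

def WeakSSPsa (US : Set (S → A → S → ℝ)) : Prop :=
  ∀ V : S → ℝ, ∃ Pstar ∈ US, ∀ (s : S) (a : A), ∀ P ∈ US,
    (∑ s', Pstar s a s' * V s') ≤ ∑ s', P s a s' * V s'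


/-- Feasibility of `û^π` for next-state-independent rewards. -/
def WeakSAFeasible {S A : Type*} [Fintype S] [Fintype A] (US : Set (S → A → S → ℝ)) : Prop :=
  ∀ π : S → A → ℝ, IsPolicy π →
    ∀ r : S → A → S → ℝ, NextStateIndep r → ∀ γ : ℝ, 0 ≤ γ → γ < 1 →
      ∀ uhat : S → ℝ, TpiHat US π r γ uhat = uhat → ∃ Phat ∈ US, TpiP π r γ Phat uhat = uhat

lemma minOver_eq_of_forall_le {K : Type*} {K0 : Set K} {f : K → ℝ} {x : K} (hx : x ∈ K0)
    (hmin : ∀ y ∈ K0, f x ≤ f y) : minOver K0 f = f x :=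
  IsLeast.csInf_eq ⟨Set.mem_image_of_mem f hx, by rintro _ ⟨y, hy, rfl⟩; exact hmin y hy⟩

lemma minOver_le {K : Type*} [TopologicalSpace K] {K0 : Set K} {f : K → ℝ} (hK : IsCompact K0)
    (hf : ContinuousOn f K0) {x : K} (hx : x ∈ K0) : minOver K0 f ≤ f x :=
  csInf_le (hK.bddBelow_image hf) (Set.mem_image_of_mem f hx)

lemma exists_minOver_eq {K : Type*} [TopologicalSpace K] {K0 : Set K} {f : K → ℝ}
    (hne : K0.Nonempty) (hK : IsCompact K0) (hf : ContinuousOn f K0) :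
    ∃ x ∈ K0, (∀ y ∈ K0, f x ≤ f y) ∧ minOver K0 f = f x := by
  obtain ⟨x, hx, hmin⟩ := hK.exists_isMinOn hne hf
  exact ⟨x, hx, hmin, minOver_eq_of_forall_le hx hmin⟩

lemma exists_nonpos_of_add_le_minOver {K : Type*} [TopologicalSpace K] {K0 : Set K}
    {f g : K → ℝ} {c : ℝ} (hne : K0.Nonempty) (hK : IsCompact K0) (hg : ContinuousOn g K0)
    (hfg : ∀ x ∈ K0, c + g x ≤ f x) (hf : minOver K0 f ≤ c) : ∃ x ∈ K0, g x ≤ 0 := by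
  obtain ⟨x, hx, hmin, -⟩ := exists_minOver_eq hne hK hg
  have : c + g x ≤ minOver K0 f := le_csInf (hne.image f) <| by
    rintro _ ⟨y, hy, rfl⟩
    exact (add_le_add_right (hmin y hy) c).trans (hfg y hy)
  exact ⟨x, hx, by linarith⟩

lemma sum_mul_le_of_mem_stdSimplex {X : Type*} [Fintype X] {p f : X → ℝ} {c : ℝ}
    (hp : p ∈ stdSimplex ℝ X) (hf : ∀ x, f x ≤ c) : ∑ x, p x * f x ≤ c :=
  calc ∑ x, p x * f x ≤ ∑ x, p x * c :=
        Finset.sum_le_sum fun x _ => mul_le_mul_of_nonneg_left (hf x) (hp.1 x)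
    _ = c := by rw [← Finset.sum_mul, hp.2, one_mul]

lemma abs_sum_mul_le_of_mem_stdSimplex {X : Type*} [Fintype X] {p f : X → ℝ} {c : ℝ}
    (hp : p ∈ stdSimplex ℝ X) (hf : ∀ x, |f x| ≤ c) : |∑ x, p x * f x| ≤ c :=
  calc |∑ x, p x * f x| ≤ ∑ x, p x * |f x| :=
        (Finset.abs_sum_le_sum_abs _ _).trans_eq
          (Finset.sum_congr rfl fun x _ => by rw [abs_mul, abs_of_nonneg (hp.1 x)])
    _ ≤ c := sum_mul_le_of_mem_stdSimplex hp hf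

lemma uniform_mem_stdSimplex {X : Type*} [Fintype X] [Nonempty X] :
    (fun _ : X => (Fintype.card X : ℝ)⁻¹) ∈ stdSimplex ℝ X :=
  ⟨fun _ => by positivity, by simp⟩

lemma eq_zero_of_sum_mul_nonpos {X : Type*} [Fintype X] {w f : X → ℝ} (hw : ∀ x, 0 < w x)
    (hf : ∀ x, 0 ≤ f x) (hsum : ∑ x, w x * f x ≤ 0) (x : X) : f x = 0 := by
  have hterm := (Finset.sum_eq_zero_iff_of_nonneg fun y _ => mul_nonneg (hw y).le (hf y)).1
    (hsum.antisymm (Finset.sum_nonneg fun y _ => mul_nonneg (hw y).le (hf y))) x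
    (Finset.mem_univ x)
  exact (mul_eq_zero.1 hterm).resolve_left (hw x).ne'

theorem _root_.ContractingWith.le_of_le_map {X : Type*} [MetricSpace X] [CompleteSpace X]
    [PartialOrder X] [ClosedIciTopology X] {K : NNReal} {f : X → X}
    (hf : ContractingWith K f) (hmono : Monotone f) {u w : X} (hu : u ≤ f u)
    (hw : Function.IsFixedPt f w) : u ≤ w := by
  -- the iterates `f^[n] u` increase and converge to the fixed point
  have : Nonempty X := ⟨u⟩
  rw [hf.fixedPoint_unique hw]
  exact ge_of_tendsto' (hf.tendsto_iterate_fixedPoint u) fun n =>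
    hmono.monotone_iterate_of_le_map hu (Nat.zero_le n)

section BellmanOperators

variable {US : Set (S → A → S → ℝ)} {π : S → A → ℝ} {r : S → A → S → ℝ} {γ : ℝ}
  {P : S → A → S → ℝ}

omit [Fintype A] in
lemma continuous_sum_mul (s : S) (a : A) (c : S → ℝ) :
    Continuous fun P : S → A → S → ℝ => ∑ s', P s a s' * c s' := by
  fun_prop

lemma continuous_TpiP_apply (u : S → ℝ) (s : S) :
    Continuous fun P => TpiP π r γ P u s := by
  unfold TpiP
  fun_prop

lemma TpiP_sub_TpiP (u w : S → ℝ) (s : S) :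
    TpiP π r γ P u s - TpiP π r γ P w s
      = ∑ a, π s a * (γ * ∑ s', P s a s' * (u s' - w s')) := by
  simp only [TpiP, ← Finset.sum_sub_distrib, ← mul_sub, Finset.mul_sum]
  congr! 3
  ring

lemma monotone_TpiP (hπ : IsPolicy π) (hP : IsKernel P) (hγ : 0 ≤ γ) :
    Monotone (TpiP π r γ P) := by
  intro u w huw s
  refine Finset.sum_le_sum fun a _ => mul_le_mul_of_nonneg_left ?_ ((hπ s).1 a)
  refine Finset.sum_le_sum fun s' _ => mul_le_mul_of_nonneg_left ?_ ((hP s a).1 s')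
  exact add_le_add_right (mul_le_mul_of_nonneg_left (huw s') hγ) _

lemma contractingWith_TpiP (hπ : IsPolicy π) (hP : IsKernel P) (hγ0 : 0 ≤ γ) (hγ1 : γ < 1) :
    ContractingWith ⟨γ, hγ0⟩ (TpiP π r γ P) := by
  refine ⟨by exact_mod_cast hγ1, LipschitzWith.of_dist_le_mul fun u w => ?_⟩
  refine (dist_pi_le_iff (mul_nonneg hγ0 dist_nonneg)).2 fun s => ?_
  rw [Real.dist_eq, TpiP_sub_TpiP]
  refine abs_sum_mul_le_of_mem_stdSimplex (hπ s) fun a => ?_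
  rw [abs_mul, abs_of_nonneg hγ0]
  gcongr
  refine abs_sum_mul_le_of_mem_stdSimplex (hP s a) fun s' => ?_
  simpa only [Real.dist_eq] using dist_le_pi_dist u w s'

lemma TpiHat_le_TpiP (hcpt : IsCompact US) (hπ : IsPolicy π) (hP : P ∈ US) (u : S → ℝ) :
    TpiHat US π r γ u ≤ TpiP π r γ P u := fun s =>
  Finset.sum_le_sum fun a _ => mul_le_mul_of_nonneg_left
    (minOver_le hcpt (continuous_sum_mul s a _).continuousOn hP) ((hπ s).1 a)

lemma le_of_TpiHat_eq_of_TpiP_eq (hcpt : IsCompact US) (hπ : IsPolicy π) (hγ0 : 0 ≤ γ)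
    (hγ1 : γ < 1) (hP : P ∈ US) (hPk : IsKernel P) {u w : S → ℝ}
    (hu : TpiHat US π r γ u = u) (hw : TpiP π r γ P w = w) : u ≤ w :=
  (contractingWith_TpiP hπ hPk hγ0 hγ1).le_of_le_map (monotone_TpiP hπ hPk hγ0)
    (hu.symm.trans_le (TpiHat_le_TpiP hcpt hπ hP u)) hw

omit [Fintype A] in
lemma sum_mul_add_of_nextStateIndep (hr : NextStateIndep r) {s : S} {a : A}
    (hP : P s a ∈ stdSimplex ℝ S) (s₁ : S) (u : S → ℝ) :
    ∑ s', P s a s' * (r s a s' + γ * u s') = r s a s₁ + γ * ∑ s', P s a s' * u s' := by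
  simp only [mul_add, Finset.sum_add_distrib, hr s a _ s₁, ← Finset.sum_mul, hP.2, one_mul,
    Finset.mul_sum]
  congr! 2
  ring

lemma TpiP_apply_of_nextStateIndep (hr : NextStateIndep r) (hP : IsKernel P) (u : S → ℝ)
    (s s₁ : S) :
    TpiP π r γ P u s = ∑ a, π s a * (r s a s₁ + γ * ∑ s', P s a s' * u s') := by
  simp only [TpiP, sum_mul_add_of_nextStateIndep hr (hP s _) s₁]

lemma TpiHat_apply_of_nextStateIndep (hne : US.Nonempty) (hker : ∀ P ∈ US, IsKernel P)
    (hcpt : IsCompact US) (hr : NextStateIndep r) (hγ : 0 ≤ γ) (u : S → ℝ) (s s₁ : S) :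
    TpiHat US π r γ u s
      = ∑ a, π s a * (r s a s₁ + γ * minOver US fun P => ∑ s', P s a s' * u s') := by
  refine Finset.sum_congr rfl fun a _ => congrArg (π s a * ·) ?_
  obtain ⟨P, hP, hmin, hPmin⟩ :=
    exists_minOver_eq hne hcpt (continuous_sum_mul s a u).continuousOn
  have hrow := fun Q (hQ : Q ∈ US) =>
    sum_mul_add_of_nextStateIndep (γ := γ) (u := u) hr (hker Q hQ s a) s₁
  rw [hPmin, ← hrow P hP]
  refine minOver_eq_of_forall_le hP fun Q hQ => ?_
  rw [hrow P hP, hrow Q hQ]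
  exact add_le_add_right (mul_le_mul_of_nonneg_left (hmin Q hQ) hγ) _

lemma TpiP_sub_TpiHat_of_nextStateIndep (hne : US.Nonempty) (hker : ∀ P ∈ US, IsKernel P)
    (hcpt : IsCompact US) (hr : NextStateIndep r) (hγ : 0 ≤ γ) (hP : P ∈ US) (u : S → ℝ)
    (s : S) :
    TpiP π r γ P u s - TpiHat US π r γ u s = γ * ∑ a, π s a *
      (∑ s', P s a s' * u s' - minOver US fun Q => ∑ s', Q s a s' * u s') := by
  rw [TpiP_apply_of_nextStateIndep hr (hker P hP) u s s,
    TpiHat_apply_of_nextStateIndep hne hker hcpt hr hγ u s s, ← Finset.sum_sub_distrib,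
    Finset.mul_sum]
  congr! 1
  ring

end BellmanOperators

variable {US : Set (S → A → S → ℝ)}

theorem weakSAFeasible_of_weakSSPsa (hne : US.Nonempty) (hker : ∀ P ∈ US, IsKernel P)
    (hcpt : IsCompact US) (h : WeakSSPsa US) : WeakSAFeasible US := by
  intro π _ r hr γ hγ0 _ u hu
  obtain ⟨P, hP, hmin⟩ := h u
  refine ⟨P, hP, funext fun s => ?_⟩
  have hgap := TpiP_sub_TpiHat_of_nextStateIndep (π := π) hne hker hcpt hr hγ0 hP u s
  rw [Finset.sum_eq_zero fun a _ => by rw [minOver_eq_of_forall_le hP (hmin s a), sub_self,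
    mul_zero], mul_zero, sub_eq_zero] at hgap
  rw [hgap, hu]

theorem weakSSPsa_of_weakSAFeasible [Nonempty A] (hne : US.Nonempty)
    (hker : ∀ P ∈ US, IsKernel P) (hcpt : IsCompact US) (h : WeakSAFeasible US) :
    WeakSSPsa US := by
  intro V
  set m : S → A → ℝ := fun s a => minOver US fun P => ∑ s', P s a s' * V s'
  set π : S → A → ℝ := fun _ _ => (Fintype.card A : ℝ)⁻¹
  have hπ : IsPolicy π := fun _ => uniform_mem_stdSimplex
  -- these rewards make `V` itself the fixed point of `T̂` at discount `1 / 2`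
  set r : S → A → S → ℝ := fun s a _ => V s - 1 / 2 * m s a
  have hr : NextStateIndep r := fun _ _ _ _ => rfl
  have hV : TpiHat US π r (1 / 2) V = V := funext fun s => by
    rw [TpiHat_apply_of_nextStateIndep hne hker hcpt hr (by norm_num) V s s]
    simp only [r, m, sub_add_cancel]
    rw [← Finset.sum_mul, (hπ s).2, one_mul]
  obtain ⟨P, hP, hPV⟩ := h π hπ r hr (1 / 2) (by norm_num) (by norm_num) V hV
  refine ⟨P, hP, fun s a Q hQ => ?_⟩
  have hgap := TpiP_sub_TpiHat_of_nextStateIndep (π := π) (γ := 1 / 2) hne hker hcpt hr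
    (by norm_num) hP V s
  rw [hPV, hV, sub_self] at hgap
  have hPa := eq_zero_of_sum_mul_nonpos (w := π s) (fun _ => by positivity)
    (fun b => sub_nonneg.2 (minOver_le hcpt (continuous_sum_mul s b V).continuousOn hP))
    (by linarith) a
  linarith [minOver_le hcpt (continuous_sum_mul s a V).continuousOn hQ]

theorem weakSATractable_of_weakSAFeasible (hker : ∀ P ∈ US, IsKernel P) (hcpt : IsCompact US)
    (h : WeakSAFeasible US) : WeakSATractable US := by
  intro π hπ r hr γ hγ0 hγ1 v hv u hu μ hμ
  obtain ⟨P, hP, hPu⟩ := h π hπ r hr γ hγ0 hγ1 u hu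
  have hvP : v P = u :=
    (contractingWith_TpiP hπ (hker P hP) hγ0 hγ1).fixedPoint_unique' (hv P hP) hPu
  have hmin : ∀ Q ∈ US, ∑ s, μ s * u s ≤ ∑ s, μ s * v Q s := fun Q hQ =>
    Finset.sum_le_sum fun s _ => mul_le_mul_of_nonneg_left
      (le_of_TpiHat_eq_of_TpiP_eq hcpt hπ hγ0 hγ1 hQ (hker Q hQ) hu (hv Q hQ) s) (hμ.1 s)
  rw [minOver_eq_of_forall_le hP (by rw [hvP]; exact hmin), hvP]

theorem weakSAFeasible_of_weakSATractable [Nonempty S] (hne : US.Nonempty)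
    (hker : ∀ P ∈ US, IsKernel P) (hcpt : IsCompact US) (h : WeakSATractable US) :
    WeakSAFeasible US := by
  intro π hπ r hr γ hγ0 hγ1 u hu
  have hfix : ∀ P, ∃ v, IsKernel P → TpiP π r γ P v = v := by
    intro P
    by_cases hP : IsKernel P
    · exact ⟨_, fun _ => (contractingWith_TpiP hπ hP hγ0 hγ1).fixedPoint_isFixedPt⟩
    · exact ⟨0, fun h => absurd h hP⟩
  choose v hv using hfix
  set μ : S → ℝ := fun _ => (Fintype.card S : ℝ)⁻¹
  have hμ : μ ∈ stdSimplex ℝ S := uniform_mem_stdSimplex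
  -- `v P = T_P (v P) ≥ T_P û` since `v P ≥ û`
  have hvP : ∀ P ∈ US, ∑ s, μ s * u s + ∑ s, μ s * (TpiP π r γ P u s - u s)
      ≤ ∑ s, μ s * v P s := fun P hP => by
    have hle := monotone_TpiP (r := r) hπ (hker P hP) hγ0
      (le_of_TpiHat_eq_of_TpiP_eq hcpt hπ hγ0 hγ1 hP (hker P hP) hu (hv P (hker P hP)))
    rw [hv P (hker P hP)] at hle
    rw [← Finset.sum_add_distrib]
    refine Finset.sum_le_sum fun s _ => ?_
    rw [← mul_add]
    exact mul_le_mul_of_nonneg_left (by linarith [hle s]) (hμ.1 s)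
  obtain ⟨P, hP, hgap⟩ := exists_nonpos_of_add_le_minOver hne hcpt
    (continuous_finsetSum _ fun s _ =>
      continuous_const.mul ((continuous_TpiP_apply u s).sub continuous_const)).continuousOn
    hvP (h π hπ r hr γ hγ0 hγ1 v (fun P hP => hv P (hker P hP)) u hu μ hμ).le
  refine ⟨P, hP, funext fun s => ?_⟩
  have hTu : u ≤ TpiP π r γ P u := hu.symm.trans_le (TpiHat_le_TpiP hcpt hπ hP u)
  have := eq_zero_of_sum_mul_nonpos (fun _ => by positivity) (fun s => sub_nonneg.2 (hTu s))
    hgap s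
  linarith

theorem stmt16 {S A : Type*} [Fintype S] [Fintype A] [Nonempty S] [Nonempty A]
    (US : Set (S → A → S → ℝ)) (hne : US.Nonempty) (hker : ∀ P ∈ US, IsKernel P)
    (hcpt : IsCompact US) :
    (WeakSATractable US ↔ WeakSAFeasible US) ∧ (WeakSAFeasible US ↔ WeakSSPsa US) :=
  ⟨⟨weakSAFeasible_of_weakSATractable hne hker hcpt,
      weakSATractable_of_weakSAFeasible hker hcpt⟩,
    ⟨weakSSPsa_of_weakSAFeasible hne hker hcpt, weakSAFeasible_of_weakSSPsa hne hker hcpt⟩⟩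

end RMDP
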